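/- arXiv:1811.09155 — 6 statements merged into one kernel-verified Lean document; each statement's English description precedes it below -/
import Mathlib

section
/- Let γ ∈ Sp_n(ℝ), let z, w ∈ ℍ_n, and set γ' := diag(I_n, −I_n) · γ⁻¹ · diag(I_n, −I_n), which again lies in Sp_n(ℝ). Assume that the matrices c_γ z + d_γ and c_{γ'} w + d_{γ'} are invertible. Then det(c_γ z + d_γ) · det(γ·z + w) = det(c_{γ'} w + d_{γ'}) · det(γ'·w + z). -/
open Matrix MeasureTheory

noncomputable section

/-- The standard symplectic form matrix `ι = [[0, -I], [I, 0]]`. -/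
def symplJ (n : ℕ) (R : Type*) [CommRing R] :
    Matrix (Fin n ⊕ Fin n) (Fin n ⊕ Fin n) R :=
  Matrix.fromBlocks 0 (-1) 1 0

/-- `γ ∈ Sp_n(R)`, i.e. `γᵀ ι γ = ι`. -/
def IsSymplectic {n : ℕ} {R : Type*} [CommRing R]
    (γ : Matrix (Fin n ⊕ Fin n) (Fin n ⊕ Fin n) R) : Prop :=
  γᵀ * symplJ n R * γ = symplJ n R

/-- The Siegel upper half-space `ℍ_n`: complex symmetric matrices with
positive definite imaginary part. -/
def SiegelUpper (n : ℕ) : Set (Matrix (Fin n) (Fin n) ℂ) :=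
  {z | z.IsSymm ∧ (z.map Complex.im).PosDef}

/-- The action `γ·z = (aγ z + bγ)(cγ z + dγ)⁻¹` of a real symplectic matrix
on the Siegel upper half-space. -/
def siegelAct {n : ℕ} (γ : Matrix (Fin n ⊕ Fin n) (Fin n ⊕ Fin n) ℝ)
    (z : Matrix (Fin n) (Fin n) ℂ) : Matrix (Fin n) (Fin n) ℂ :=
  ((γ.toBlocks₁₁).map Complex.ofReal * z + (γ.toBlocks₁₂).map Complex.ofReal) *
    ((γ.toBlocks₂₁).map Complex.ofReal * z + (γ.toBlocks₂₂).map Complex.ofReal)⁻¹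

/-! For symplectic `γ = [[a, b], [c, d]]` one has `γ⁻¹ = [[dᵀ, -bᵀ], [-cᵀ, aᵀ]]`, so `γ'` has the
blocks `[[dᵀ, bᵀ], [cᵀ, aᵀ]]`. Clearing the denominators, the left side is
`det (a z + b + w (c z + d))` and the right side `det (dᵀ w + bᵀ + z (cᵀ w + aᵀ))`; since `z` and `w`
are symmetric, the second matrix is the transpose of the first. -/

theorem isSymplectic_iff_mem_symplecticGroup {n : ℕ} {R : Type*} [CommRing R]
    {γ : Matrix (Fin n ⊕ Fin n) (Fin n ⊕ Fin n) R} :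
    IsSymplectic γ ↔ γ ∈ symplecticGroup (Fin n) R :=
  SymplecticGroup.mem_iff'.symm

theorem isSymplectic_fromBlocks_neg_neg_iff {n : ℕ} {R : Type*} [CommRing R]
    {a b c d : Matrix (Fin n) (Fin n) R} :
    IsSymplectic (fromBlocks a (-b) (-c) d) ↔ IsSymplectic (fromBlocks a b c d) := by
  simp only [isSymplectic_iff_mem_symplecticGroup, SymplecticGroup.fromBlocks_mem_iff,
    transpose_neg, mul_neg, neg_mul, neg_neg, neg_inj]

theorem fromBlocks_one_neg_one_conj {n : ℕ} {R : Type*} [CommRing R]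
    (a b c d : Matrix (Fin n) (Fin n) R) :
    fromBlocks 1 0 0 (-1) * fromBlocks a b c d * fromBlocks 1 0 0 (-1) =
      fromBlocks a (-b) (-c) d := by
  simp [fromBlocks_multiply]

namespace IsSymplectic

variable {n : ℕ} {R : Type*} [CommRing R] {γ : Matrix (Fin n ⊕ Fin n) (Fin n ⊕ Fin n) R}

theorem inv_eq_fromBlocks (hγ : IsSymplectic γ) :
    γ⁻¹ = fromBlocks γ.toBlocks₂₂ᵀ (-γ.toBlocks₁₂ᵀ) (-γ.toBlocks₂₁ᵀ) γ.toBlocks₁₁ᵀ := by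
  rw [SymplecticGroup.inv_eq_symplectic_inv γ (isSymplectic_iff_mem_symplecticGroup.mp hγ),
    ← fromBlocks_toBlocks γ]
  simp [J, fromBlocks_transpose, fromBlocks_multiply, fromBlocks_neg]

theorem conj_fromBlocks_one_neg_one (hγ : IsSymplectic γ) :
    IsSymplectic (fromBlocks 1 0 0 (-1) * γ * fromBlocks 1 0 0 (-1)) := by
  rw [← fromBlocks_toBlocks γ, fromBlocks_one_neg_one_conj]
  exact isSymplectic_fromBlocks_neg_neg_iff.mpr ((fromBlocks_toBlocks γ).symm ▸ hγ)

theorem inv (hγ : IsSymplectic γ) : IsSymplectic γ⁻¹ := by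
  rw [isSymplectic_iff_mem_symplecticGroup] at hγ ⊢
  simpa [SymplecticGroup.coe_inv'] using (⟨γ, hγ⟩⁻¹ : symplecticGroup (Fin n) R).2

theorem conj_inv_eq_fromBlocks (hγ : IsSymplectic γ) :
    fromBlocks 1 0 0 (-1) * γ⁻¹ * fromBlocks 1 0 0 (-1) =
      fromBlocks γ.toBlocks₂₂ᵀ γ.toBlocks₁₂ᵀ γ.toBlocks₂₁ᵀ γ.toBlocks₁₁ᵀ := by
  rw [hγ.inv_eq_fromBlocks, fromBlocks_one_neg_one_conj, neg_neg, neg_neg]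

end IsSymplectic

theorem det_mul_det_siegelAct_add {n : ℕ} {γ : Matrix (Fin n ⊕ Fin n) (Fin n ⊕ Fin n) ℝ}
    {z : Matrix (Fin n) (Fin n) ℂ}
    (h : IsUnit ((γ.toBlocks₂₁).map Complex.ofReal * z + (γ.toBlocks₂₂).map Complex.ofReal).det)
    (w : Matrix (Fin n) (Fin n) ℂ) :
    ((γ.toBlocks₂₁).map Complex.ofReal * z + (γ.toBlocks₂₂).map Complex.ofReal).det *
        (siegelAct γ z + w).det =
      ((γ.toBlocks₁₁).map Complex.ofReal * z + (γ.toBlocks₁₂).map Complex.ofReal +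
        w * ((γ.toBlocks₂₁).map Complex.ofReal * z + (γ.toBlocks₂₂).map Complex.ofReal)).det := by
  rw [mul_comm, ← det_mul, siegelAct, add_mul, mul_assoc, nonsing_inv_mul _ h, mul_one]

theorem transpose_mul_add_add_mul_mul_add {ι R : Type*} [CommRing R] [Fintype ι]
    {z w : Matrix ι ι R} (hz : z.IsSymm) (hw : w.IsSymm) (a b c d : Matrix ι ι R) :
    (a * z + b + w * (c * z + d))ᵀ = dᵀ * w + bᵀ + z * (cᵀ * w + aᵀ) := by
  simp only [transpose_add, transpose_mul, hz.eq, hw.eq, mul_add, mul_assoc]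
  abel

theorem statement2 {n : ℕ} (γ : Matrix (Fin n ⊕ Fin n) (Fin n ⊕ Fin n) ℝ)
    (hγ : IsSymplectic γ) (z w : Matrix (Fin n) (Fin n) ℂ)
    (hz : z ∈ SiegelUpper n) (hw : w ∈ SiegelUpper n)
    (γ' : Matrix (Fin n ⊕ Fin n) (Fin n ⊕ Fin n) ℝ)
    (hγ'def : γ' = Matrix.fromBlocks 1 0 0 (-1) * γ⁻¹ * Matrix.fromBlocks 1 0 0 (-1))
    (h1 : IsUnit ((γ.toBlocks₂₁).map Complex.ofReal * z +
      (γ.toBlocks₂₂).map Complex.ofReal).det)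
    (h2 : IsUnit ((γ'.toBlocks₂₁).map Complex.ofReal * w +
      (γ'.toBlocks₂₂).map Complex.ofReal).det) :
    IsSymplectic γ' ∧
      ((γ.toBlocks₂₁).map Complex.ofReal * z + (γ.toBlocks₂₂).map Complex.ofReal).det *
        (siegelAct γ z + w).det =
      ((γ'.toBlocks₂₁).map Complex.ofReal * w + (γ'.toBlocks₂₂).map Complex.ofReal).det *
        (siegelAct γ' w + z).det := by
  refine ⟨hγ'def ▸ hγ.inv.conj_fromBlocks_one_neg_one, ?_⟩
  rw [det_mul_det_siegelAct_add h1, det_mul_det_siegelAct_add h2, ← det_transpose,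
    transpose_mul_add_add_mul_mul_add hz.1 hw.1, hγ'def, hγ.conj_inv_eq_fromBlocks]
  simp only [toBlocks_fromBlocks₁₁, toBlocks_fromBlocks₁₂, toBlocks_fromBlocks₂₁,
    toBlocks_fromBlocks₂₂, transpose_map]
end
end

section
/- Let γ ∈ Sp_n(ℤ) with lower blocks c = c_γ and d = d_γ in M_n(ℤ), and let r be the rank of c regarded as a matrix over ℚ. Then there exist matrices U₁, U₂ ∈ GL_n(ℤ) and matrices c₁, d₁ ∈ M_r(ℤ) with det(c₁) ≠ 0 and c₁ d₁ᵀ symmetric, such that c = U₁ · [[c₁, 0],[0, 0]] · U₂ᵀ and d = U₁ · [[d₁, 0],[0, I_{n−r}]] · U₂⁻¹, where the block matrices have diagonal blocks of sizes r and n − r. -/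
open Matrix

noncomputable section

/-!
Over the principal ideal domain `ℤ`, the Smith normal form gives unimodular `U`, `V` with
`c = U · diag(c₁, 0) · V`, where `c₁` is nonsingular of size `rank c`. The lower row `(c, d)` of a
symplectic matrix satisfies `c dᵀ = d cᵀ` and `c P + d Q = 1` for some `P`, `Q`, and both relations
survive the change `(c, d) ↦ (U⁻¹ c V⁻¹, U⁻¹ d Vᵀ)`. Once `c = diag(c₁, 0)`, symmetry gives
`c₁ d₂₁ᵀ = 0`, so `d₂₁ = 0`, and makes `c₁ d₁₁ᵀ` symmetric; the lower right block of `c P + d Q = 1`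
then reads `d₂₂ Q₂₂ = 1`, so `d₂₂` is unimodular. Clearing `d₁₂` by a row operation and scaling the
last block column by `d₂₂⁻¹` brings `d` to `diag(d₁₁, 1)` while leaving `diag(c₁, 0)` unchanged.
-/

theorem LinearMap.exists_smith_bases {R M N ι : Type*} [CommRing R] [IsDomain R]
    [IsPrincipalIdealRing R] [AddCommGroup M] [Module R M] [Module.Free R M] [Module.Finite R M]
    [AddCommGroup N] [Module R N] [Finite ι] (bN : Module.Basis ι R N) (φ : M →ₗ[R] N) :
    ∃ (m k : ℕ) (bsrc : Module.Basis (Fin m ⊕ Fin k) R M) (btgt : Module.Basis ι R N)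
      (f : Fin m ↪ ι) (a : Fin m → R), (∀ i, a i ≠ 0) ∧
      (∀ i, φ (bsrc (.inl i)) = a i • btgt (f i)) ∧ ∀ j, φ (bsrc (.inr j)) = 0 := by
  obtain ⟨m, snf⟩ := (LinearMap.range φ).smithNormalForm bN
  obtain ⟨k, bK⟩ := (LinearMap.ker φ).basisOfPid (Module.Free.chooseBasis R M)
  have : Module.Projective R (LinearMap.range φ) := .of_basis snf.bN
  obtain ⟨s, hs⟩ := Module.projective_lifting_property φ.rangeRestrict LinearMap.id
    φ.surjective_rangeRestrict
  have hexact : Function.Exact (LinearMap.ker φ).subtype φ.rangeRestrict := fun x => by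
    simp [Subtype.ext_iff]
  obtain ⟨e, he₁, he₂⟩ : ∃ e : M ≃ₗ[R] LinearMap.ker φ × LinearMap.range φ,
      (LinearMap.ker φ).subtype = e.symm.toLinearMap ∘ₗ LinearMap.inl R _ _ ∧
        φ.rangeRestrict = LinearMap.snd R _ _ ∘ₗ e.toLinearMap :=
    ⟨_, (hexact.splitSurjectiveEquiv (Submodule.subtype_injective _) ⟨s, hs⟩).2⟩
  let bsrc := (snf.bN.prod bK).map ((LinearEquiv.prodComm R _ _).trans e.symm)
  have hφ : ∀ x, φ x = φ.rangeRestrict x := fun _ => rfl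
  refine ⟨m, k, bsrc, snf.bM, snf.f, snf.a, fun i hi => snf.bN.ne_zero i ?_, fun i => ?_,
    fun j => ?_⟩
  · ext1; rw [snf.snf, hi, zero_smul]; rfl
  · rw [← snf.snf, hφ, he₂]
    simp [bsrc]
  · have hker : e.symm (bK j, 0) = bK j := (LinearMap.congr_fun he₁ (bK j)).symm
    simp [bsrc, hker]

section Smith

variable {R K ι : Type*} [CommRing R] [Field K] [Fintype ι] [DecidableEq ι]

theorem Matrix.exists_unimodular_smith [IsDomain R] [IsPrincipalIdealRing R]
    (c : Matrix ι ι R) :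
    ∃ m k : ℕ, m + k = Fintype.card ι ∧ ∀ e : Fin m ⊕ Fin k ≃ ι,
      ∃ (U V : Matrix ι ι R) (g : Fin m → R), IsUnit U.det ∧ IsUnit V.det ∧ (∀ i, g i ≠ 0) ∧
        c = U * reindex e e (fromBlocks (diagonal g) 0 0 0) * V := by
  obtain ⟨m, k, bsrc, btgt, f, a, ha, hinl, hinr⟩ :=
    (toLin' c).exists_smith_bases (Pi.basisFun R ι)
  refine ⟨m, k, by simpa using Fintype.card_congr (bsrc.indexEquiv (Pi.basisFun R ι)),
    fun e => ?_⟩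
  -- permute the target basis so that its `f i`-th vector sits at position `e (.inl i)`
  obtain ⟨π, hπ⟩ := Equiv.Perm.exists_extending_pair f (e ∘ .inl) f.injective
    (e.injective.comp Sum.inl_injective)
  let b₁ := bsrc.reindex e
  let b₂ := btgt.reindex π
  have hdiag :
      LinearMap.toMatrix b₁ b₂ (toLin' c) = reindex e e (fromBlocks (diagonal a) 0 0 0) := by
    ext t s
    obtain ⟨t, rfl⟩ := e.surjective t
    obtain ⟨s, rfl⟩ := e.surjective s
    rw [LinearMap.toMatrix_apply]
    rcases s with i | j
    · simp only [b₁, b₂, Module.Basis.reindex_apply, Equiv.symm_apply_apply, hinl,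
        Module.Basis.repr_reindex_apply, map_smul, Module.Basis.repr_self, Finsupp.smul_apply,
        Finsupp.single_apply, Equiv.eq_symm_apply, hπ]
      rcases t with t | t
      · obtain rfl | h := eq_or_ne t i
        · simp
        · simp [h, h.symm]
      · simp
    · rcases t with t | t <;> simp [b₁, b₂, hinr]
  refine ⟨(Pi.basisFun R ι).toMatrix b₂, b₁.toMatrix (Pi.basisFun R ι), a,
    isUnit_det_of_right_inverse (Module.Basis.toMatrix_mul_toMatrix_flip _ _),
    isUnit_det_of_left_inverse (Module.Basis.toMatrix_mul_toMatrix_flip _ _), ha, ?_⟩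
  rw [← hdiag, basis_toMatrix_mul_linearMap_toMatrix_mul_basis_toMatrix,
    LinearMap.toMatrix_eq_toMatrix', LinearMap.toMatrix'_toLin']

theorem Matrix.rank_map_mul_mul_of_isUnit_det (f : R →+* K) {U V : Matrix ι ι R}
    (hU : IsUnit U.det) (hV : IsUnit V.det) (A : Matrix ι ι R) :
    ((U * A * V).map f).rank = (A.map f).rank := by
  have hunit : ∀ W : Matrix ι ι R, IsUnit W.det → IsUnit (W.map f).det := fun W hW => by
    simpa [RingHom.map_det] using hW.map f
  rw [Matrix.map_mul, Matrix.map_mul, rank_mul_eq_left_of_isUnit_det _ _ (hunit V hV),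
    rank_mul_eq_right_of_isUnit_det _ _ (hunit U hU)]

theorem Matrix.rank_map_fromBlocks_diagonal_zero {l o : Type*} [Fintype l] [DecidableEq l]
    [Fintype o] [DecidableEq o] (f : R →+* K) (hf : Function.Injective f)
    {g : l → R} (hg : ∀ i, g i ≠ 0) :
    ((fromBlocks (diagonal g) 0 0 (0 : Matrix o o R)).map f).rank = Fintype.card l := by
  classical
  rw [← diagonal_zero, fromBlocks_diagonal, diagonal_map (map_zero f), rank_diagonal,
    Fintype.card_congr Equiv.subtypeSum, Fintype.card_sum]
  simp [map_eq_zero_iff f hf, hg]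

theorem Matrix.exists_unimodular_smith_of_rank_eq [IsDomain R] [IsPrincipalIdealRing R]
    (f : R →+* K) (hf : Function.Injective f)
    (c : Matrix ι ι R) {m k : ℕ} (e : Fin m ⊕ Fin k ≃ ι) (hc : (c.map f).rank = m) :
    ∃ (U V : Matrix ι ι R) (g : Fin m → R), IsUnit U.det ∧ IsUnit V.det ∧ (∀ i, g i ≠ 0) ∧
      c = U * reindex e e (fromBlocks (diagonal g) 0 0 0) * V := by
  obtain ⟨m', k', hcard, hsmith⟩ := c.exists_unimodular_smith
  obtain ⟨U, V, g, hU, hV, hg, hc'⟩ := hsmith (Fintype.equivOfCardEq (by simp [hcard]))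
  obtain rfl : m' = m := by
    rw [← hc, hc', rank_map_mul_mul_of_isUnit_det f hU hV, reindex_apply, ← submatrix_map,
      rank_submatrix, rank_map_fromBlocks_diagonal_zero f hf hg, Fintype.card_fin]
  obtain rfl : k' = k := by
    have := Fintype.card_congr e
    simp only [Fintype.card_sum, Fintype.card_fin] at this
    omega
  exact hsmith e

end Smith

theorem Matrix.eq_zero_of_mul_eq_zero_of_det_ne_zero {R l o : Type*} [CommRing R] [IsDomain R]
    [Fintype l] [DecidableEq l] {A : Matrix l l R}
    (hA : A.det ≠ 0) {X : Matrix l o R} (h : A * X = 0) : X = 0 := by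
  have : A.det • X = 0 := by
    rw [← Matrix.one_mul X, ← Matrix.smul_mul, ← adjugate_mul, Matrix.mul_assoc, h,
      Matrix.mul_zero]
  ext i j
  simpa [hA] using congrFun₂ this i j

section Pairs

variable {R : Type*} [CommRing R] {ι κ l o : Type*} [Fintype ι] [DecidableEq ι]
  [Fintype κ] [DecidableEq κ] [Fintype l] [DecidableEq o]

def IsSymmetricCoprimePair (c d : Matrix ι ι R) : Prop :=
  c * dᵀ = d * cᵀ ∧ ∃ P Q : Matrix ι ι R, c * P + d * Q = 1

def HasBlockNormalForm (e : l ⊕ o ≃ ι) (c₁ : Matrix l l R) (c d : Matrix ι ι R) : Prop :=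
  ∃ U₁ U₂ : Matrix ι ι R, IsUnit U₁.det ∧ IsUnit U₂.det ∧ ∃ d₁ : Matrix l l R,
    (c₁ * d₁ᵀ).IsSymm ∧ c = U₁ * reindex e e (fromBlocks c₁ 0 0 0) * U₂ᵀ ∧
      d = U₁ * reindex e e (fromBlocks d₁ 0 0 1) * U₂⁻¹

variable {c d U V : Matrix ι ι R}

theorem IsSymmetricCoprimePair.unimodular_mul (h : IsSymmetricCoprimePair c d)
    (hU : IsUnit U.det) (hV : IsUnit V.det) :
    IsSymmetricCoprimePair (U * c * V) (U * d * (Vᵀ)⁻¹) := by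
  obtain ⟨hsymm, P, Q, hPQ⟩ := h
  have hVt : IsUnit Vᵀ.det := by rwa [det_transpose]
  refine ⟨?_, V⁻¹ * P * U⁻¹, Vᵀ * Q * U⁻¹, ?_⟩
  · calc U * c * V * (U * d * (Vᵀ)⁻¹)ᵀ = U * c * (V * V⁻¹) * dᵀ * Uᵀ := by
          simp only [transpose_mul, transpose_nonsing_inv, transpose_transpose, Matrix.mul_assoc]
      _ = U * (d * cᵀ) * Uᵀ := by rw [mul_nonsing_inv _ hV, ← hsymm]; simp [Matrix.mul_assoc]
      _ = U * d * ((Vᵀ)⁻¹ * Vᵀ) * cᵀ * Uᵀ := by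
          rw [nonsing_inv_mul _ hVt]; simp [Matrix.mul_assoc]
      _ = U * d * (Vᵀ)⁻¹ * (U * c * V)ᵀ := by simp only [transpose_mul, Matrix.mul_assoc]
  · calc U * c * V * (V⁻¹ * P * U⁻¹) + U * d * (Vᵀ)⁻¹ * (Vᵀ * Q * U⁻¹)
        = U * (c * (V * V⁻¹) * P + d * ((Vᵀ)⁻¹ * Vᵀ) * Q) * U⁻¹ := by
          simp only [Matrix.mul_add, Matrix.add_mul, Matrix.mul_assoc]
      _ = 1 := by
          rw [mul_nonsing_inv _ hV, nonsing_inv_mul _ hVt, Matrix.mul_one, Matrix.mul_one, hPQ,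
            Matrix.mul_one, mul_nonsing_inv _ hU]

theorem IsSymmetricCoprimePair.reindex (h : IsSymmetricCoprimePair c d) (e : ι ≃ κ) :
    IsSymmetricCoprimePair (Matrix.reindex e e c) (Matrix.reindex e e d) := by
  obtain ⟨hsymm, P, Q, hPQ⟩ := h
  refine ⟨?_, Matrix.reindex e e P, Matrix.reindex e e Q, ?_⟩
  · simp [reindex_apply, submatrix_mul_equiv, transpose_submatrix, hsymm]
  · have h := congrArg (Matrix.reindex e e) hPQ
    simp only [reindex_apply, submatrix_one_equiv] at h
    simp only [reindex_apply, submatrix_mul_equiv]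
    exact h

theorem IsSymmetricCoprimePair.hasBlockNormalForm_fromBlocks [IsDomain R] [DecidableEq l]
    [Fintype o] {c₁ : Matrix l l R} (hc₁ : c₁.det ≠ 0) {d : Matrix (l ⊕ o) (l ⊕ o) R}
    (h : IsSymmetricCoprimePair (fromBlocks c₁ 0 0 0) d) :
    HasBlockNormalForm (Equiv.refl _) c₁ (fromBlocks c₁ 0 0 0) d := by
  obtain ⟨hsymm, P, Q, hPQ⟩ := h
  obtain ⟨d₁, d₁₂, d₂₁, d₂₂, rfl⟩ : ∃ d₁ d₁₂ d₂₁ d₂₂, d = fromBlocks d₁ d₁₂ d₂₁ d₂₂ :=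
    ⟨_, _, _, _, (fromBlocks_toBlocks d).symm⟩
  rw [← fromBlocks_toBlocks P, ← fromBlocks_toBlocks Q] at hPQ
  simp only [fromBlocks_transpose, fromBlocks_multiply, fromBlocks_add, ← fromBlocks_one,
    fromBlocks_inj, transpose_zero, Matrix.zero_mul, Matrix.mul_zero, add_zero, zero_add]
    at hsymm hPQ
  obtain ⟨hsymm₁₁, hsymm₁₂, -, -⟩ := hsymm
  obtain rfl : d₂₁ = 0 :=
    transpose_eq_zero.mp (eq_zero_of_mul_eq_zero_of_det_ne_zero hc₁ hsymm₁₂)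
  have hd₂₂ : IsUnit d₂₂.det := isUnit_det_of_right_inverse (by simpa using hPQ.2.2.2)
  have hK : (fromBlocks 1 0 0 d₂₂⁻¹ : Matrix (l ⊕ o) (l ⊕ o) R)⁻¹ = fromBlocks 1 0 0 d₂₂ :=
    inv_eq_left_inv (by simp [fromBlocks_multiply, mul_nonsing_inv _ hd₂₂])
  refine ⟨fromBlocks 1 (d₁₂ * d₂₂⁻¹) 0 1, fromBlocks 1 0 0 d₂₂⁻¹, by simp,
    by simpa [det_fromBlocks_zero₂₁] using isUnit_nonsing_inv_det _ hd₂₂, d₁, ?_, ?_, ?_⟩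
  · rw [IsSymm, transpose_mul, transpose_transpose, hsymm₁₁]
  · simp [fromBlocks_transpose, fromBlocks_multiply]
  · simp [hK, fromBlocks_multiply, nonsing_inv_mul_cancel_right _ _ hd₂₂]

theorem HasBlockNormalForm.reindex {e : l ⊕ o ≃ ι} {c₁ : Matrix l l R}
    (h : HasBlockNormalForm e c₁ c d) (e' : ι ≃ κ) :
    HasBlockNormalForm (e.trans e') c₁ (Matrix.reindex e' e' c) (Matrix.reindex e' e' d) := by
  obtain ⟨U₁, U₂, hU₁, hU₂, d₁, hsymm, rfl, rfl⟩ := h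
  refine ⟨Matrix.reindex e' e' U₁, Matrix.reindex e' e' U₂, by simpa, by simpa, d₁, hsymm, ?_, ?_⟩
  · simp only [reindex_apply, Equiv.symm_trans, Equiv.coe_trans, ← submatrix_submatrix,
      submatrix_mul_equiv, transpose_submatrix]
  · simp only [reindex_apply, Equiv.symm_trans, Equiv.coe_trans, ← submatrix_submatrix,
      submatrix_mul_equiv, inv_submatrix_equiv]

theorem HasBlockNormalForm.unimodular_mul {e : l ⊕ o ≃ ι} {c₁ : Matrix l l R}
    (h : HasBlockNormalForm e c₁ c d) (hU : IsUnit U.det) (hV : IsUnit V.det) :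
    HasBlockNormalForm e c₁ (U * c * V) (U * d * (Vᵀ)⁻¹) := by
  obtain ⟨U₁, U₂, hU₁, hU₂, d₁, hsymm, rfl, rfl⟩ := h
  refine ⟨U * U₁, Vᵀ * U₂, by simpa [det_mul] using hU.mul hU₁,
    by simpa [det_mul] using hV.mul hU₂, d₁, hsymm, ?_, ?_⟩
  · simp [transpose_mul, Matrix.mul_assoc]
  · simp [Matrix.mul_inv_rev, Matrix.mul_assoc]

theorem IsSymmetricCoprimePair.hasBlockNormalForm [IsDomain R] [DecidableEq l] [Fintype o]
    {e : l ⊕ o ≃ ι} {c₁ : Matrix l l R} (h : IsSymmetricCoprimePair c d)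
    (hc₁ : c₁.det ≠ 0) (hU : IsUnit U.det) (hV : IsUnit V.det)
    (hc : c = U * Matrix.reindex e e (fromBlocks c₁ 0 0 0) * V) :
    HasBlockNormalForm e c₁ c d := by
  have hU' := isUnit_nonsing_inv_det U hU
  have hV' := isUnit_nonsing_inv_det V hV
  have hcanon : IsSymmetricCoprimePair (fromBlocks c₁ 0 0 0)
      (Matrix.reindex e.symm e.symm (U⁻¹ * d * Vᵀ)) := by
    have := (h.unimodular_mul hU' hV').reindex e.symm
    rwa [hc, transpose_nonsing_inv, nonsing_inv_nonsing_inv _ (by rwa [det_transpose]),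
      Matrix.mul_assoc, Matrix.mul_assoc, mul_nonsing_inv _ hV, Matrix.mul_one,
      ← Matrix.mul_assoc, nonsing_inv_mul _ hU, Matrix.one_mul, ← reindex_symm,
      Equiv.symm_apply_apply] at this
  have := ((hcanon.hasBlockNormalForm_fromBlocks hc₁).reindex e).unimodular_mul hU hV
  rwa [Equiv.refl_trans, ← reindex_symm, Equiv.apply_symm_apply, ← hc, Matrix.mul_assoc U,
    Matrix.mul_assoc, mul_nonsing_inv _ (by rwa [det_transpose]), Matrix.mul_one,
    mul_nonsing_inv_cancel_left _ _ hU] at this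

end Pairs

namespace IsSymplectic

variable {n : ℕ} {R : Type*} [CommRing R] {γ : Matrix (Fin n ⊕ Fin n) (Fin n ⊕ Fin n) R}

theorem mul_symplJ_mul_transpose (hγ : IsSymplectic γ) :
    γ * symplJ n R * γᵀ = symplJ n R := by
  set J := symplJ n R
  have hJ : J * J = -1 := by
    simp [J, symplJ, fromBlocks_multiply, ← fromBlocks_one, fromBlocks_neg]
  have hinv : γ * (-(J * γᵀ * J)) = 1 := mul_eq_one_comm.mp <| by
    calc -(J * γᵀ * J) * γ = -(J * (γᵀ * J * γ)) := by noncomm_ring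
      _ = 1 := by rw [show γᵀ * J * γ = J from hγ, hJ, neg_neg]
  calc γ * J * γᵀ = -(γ * J * γᵀ * (J * J)) := by rw [hJ]; noncomm_ring
    _ = γ * (-(J * γᵀ * J)) * J := by noncomm_ring
    _ = J := by rw [hinv, Matrix.one_mul]

theorem isSymmetricCoprimePair (hγ : IsSymplectic γ) :
    IsSymmetricCoprimePair γ.toBlocks₂₁ γ.toBlocks₂₂ := by
  have h := hγ.mul_symplJ_mul_transpose
  rw [← fromBlocks_toBlocks γ, symplJ, fromBlocks_transpose, fromBlocks_multiply,
    fromBlocks_multiply] at h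
  simp only [Matrix.mul_zero, Matrix.mul_one, Matrix.mul_neg, Matrix.neg_mul, add_zero,
    zero_add, fromBlocks_inj] at h
  obtain ⟨-, -, h₂₁, h₂₂⟩ := h
  refine ⟨(add_neg_eq_zero.mp h₂₂).symm, -γ.toBlocks₁₂ᵀ, γ.toBlocks₁₁ᵀ, ?_⟩
  rw [Matrix.mul_neg, add_comm, ← sub_eq_add_neg, ← h₂₁, sub_eq_add_neg]

end IsSymplectic

theorem statement3 {n : ℕ} (γ : Matrix (Fin n ⊕ Fin n) (Fin n ⊕ Fin n) ℤ)
    (hγ : IsSymplectic γ) (r : ℕ) (hr : r ≤ n)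
    (hrank : ((γ.toBlocks₂₁).map (Int.cast : ℤ → ℚ)).rank = r) :
    ∃ (U₁ U₂ : Matrix (Fin n) (Fin n) ℤ), IsUnit U₁.det ∧ IsUnit U₂.det ∧
      ∃ (c₁ d₁ : Matrix (Fin r) (Fin r) ℤ), c₁.det ≠ 0 ∧ (c₁ * d₁ᵀ).IsSymm ∧
        γ.toBlocks₂₁ = U₁ *
          (Matrix.reindex (finSumFinEquiv.trans (finCongr (Nat.add_sub_cancel' hr)))
            (finSumFinEquiv.trans (finCongr (Nat.add_sub_cancel' hr)))
            (Matrix.fromBlocks c₁ 0 0 (0 : Matrix (Fin (n - r)) (Fin (n - r)) ℤ))) * U₂ᵀ ∧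
        γ.toBlocks₂₂ = U₁ *
          (Matrix.reindex (finSumFinEquiv.trans (finCongr (Nat.add_sub_cancel' hr)))
            (finSumFinEquiv.trans (finCongr (Nat.add_sub_cancel' hr)))
            (Matrix.fromBlocks d₁ 0 0 (1 : Matrix (Fin (n - r)) (Fin (n - r)) ℤ))) * U₂⁻¹ := by
  obtain ⟨U, V, g, hU, hV, hg, hc⟩ := γ.toBlocks₂₁.exists_unimodular_smith_of_rank_eq
    (Int.castRingHom ℚ) Int.cast_injective
    (finSumFinEquiv.trans (finCongr (Nat.add_sub_cancel' hr))) hrank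
  have hdet : (diagonal g).det ≠ 0 := by
    rw [det_diagonal]
    exact Finset.prod_ne_zero_iff.mpr fun i _ => hg i
  obtain ⟨U₁, U₂, hU₁, hU₂, d₁, hsymm, hc', hd'⟩ :=
    hγ.isSymmetricCoprimePair.hasBlockNormalForm hdet hU hV hc
  exact ⟨U₁, U₂, hU₁, hU₂, diagonal g, d₁, hdet, hsymm, hc', hd'⟩
end
end

section
/- If r ≥ 1 and w is a complex symmetric r×r matrix whose imaginary part Im w (taken entrywise) is positive definite, then |det w| ≥ det(Im w). -/
/-!
Write `Y = Sᴴ S`. When `S` is invertible, `X + iY = Sᴴ (B + i) S` with `B = S⁻ᴴ X S⁻¹` Hermitian,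
so `|det (X + iY)| = det Y · |det (B + i)|`. The eigenvalues of `B + i` are `λⱼ + i` with `λⱼ` real,
each of modulus at least `1`, hence `|det (B + i)| ≥ 1`. A complex symmetric `w` is such an
`X + iY` with `X = Re w` and `Y = Im w`.
-/

open Matrix Complex
open scoped MatrixOrder ComplexOrder

theorem Matrix.IsHermitian.one_le_norm_det_add_I_smul_one {n : Type*} [Fintype n]
    [DecidableEq n] {A : Matrix n n ℂ} (hA : A.IsHermitian) : 1 ≤ ‖(A + I • 1).det‖ := by
  have hcharpoly : A.charpoly.eval (-I) = (-1) ^ Fintype.card n * (A + I • 1).det := by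
    rw [eval_charpoly, ← det_neg, neg_add', smul_one_eq_diagonal, scalar_apply, neg_sub_comm]
    simp
  have hnorm : ‖(A + I • 1).det‖ = ∏ i, ‖-I - hA.eigenvalues i‖ := by
    simpa [hA.charpoly_eq, Polynomial.eval_prod] using congrArg norm hcharpoly.symm
  rw [hnorm]
  refine Finset.one_le_prod fun i _ => ?_
  simpa using abs_im_le_norm (-I - hA.eigenvalues i)

theorem Matrix.PosSemidef.norm_det_le_norm_det_add_I_smul {n : Type*} [Fintype n]
    [DecidableEq n] {X Y : Matrix n n ℂ} (hX : X.IsHermitian) (hY : Y.PosSemidef) :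
    ‖Y.det‖ ≤ ‖(X + I • Y).det‖ := by
  obtain ⟨S, rfl⟩ := CStarAlgebra.nonneg_iff_eq_star_mul_self.mp hY.nonneg
  rw [star_eq_conjTranspose]
  by_cases hS₀ : S.det = 0
  · simp [hS₀]
  have hS : IsUnit S.det := isUnit_iff_ne_zero.mpr hS₀
  have hSct : IsUnit Sᴴ.det := by simpa using hS.star
  have hB : ((S⁻¹)ᴴ * X * S⁻¹).IsHermitian := isHermitian_conjTranspose_mul_mul _ hX
  have hfactor : X + I • (Sᴴ * S) = Sᴴ * ((S⁻¹)ᴴ * X * S⁻¹ + I • 1) * S := by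
    simp [conjTranspose_nonsing_inv, mul_add, add_mul, mul_assoc,
      mul_nonsing_inv_cancel_left _ _ hSct, nonsing_inv_mul_cancel_right _ _ hS]
  calc ‖(Sᴴ * S).det‖ = ‖(Sᴴ * S).det‖ * 1 := (mul_one _).symm
    _ ≤ ‖(Sᴴ * S).det‖ * ‖((S⁻¹)ᴴ * X * S⁻¹ + I • 1).det‖ := by
      gcongr
      exact hB.one_le_norm_det_add_I_smul_one
    _ = ‖(X + I • (Sᴴ * S)).det‖ := by
      simp only [hfactor, det_mul, norm_mul]
      ring

theorem Matrix.PosSemidef.map_ofReal {n : Type*} [Fintype n] [DecidableEq n]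
    {Y : Matrix n n ℝ} (hY : Y.PosSemidef) : (Y.map ofReal).PosSemidef := by
  obtain ⟨S, rfl⟩ := CStarAlgebra.nonneg_iff_eq_star_mul_self.mp hY.nonneg
  have hmap : (star S * S).map ofReal = (S.map ofReal)ᴴ * S.map ofReal := by
    rw [← conjTranspose_map _ fun _ => (conj_ofReal _).symm]
    exact Matrix.map_mul (f := ofRealHom)
  exact hmap ▸ posSemidef_conjTranspose_mul_self _

theorem statement4_general {r : ℕ} (w : Matrix (Fin r) (Fin r) ℂ)
    (hsymm : w.IsSymm) (hpos : (w.map Complex.im).PosDef) :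
    (w.map Complex.im).det ≤ ‖w.det‖ := by
  have hw : w = (w.map re).map ofReal + I • (w.map im).map ofReal := by
    ext i j
    simp [Complex.ext_iff]
  have hX : ((w.map re).map ofReal).IsHermitian :=
    (isHermitian_iff_isSymm.mpr (hsymm.map re)).map _ fun _ => by simp
  calc (w.map im).det ≤ ‖((w.map im).det : ℂ)‖ := by
        rw [norm_real]
        exact Real.le_norm_self _
    _ = ‖((w.map im).map ofReal).det‖ := by
        rw [← ofRealHom_eq_coe, RingHom.map_det]
        rfl
    _ ≤ ‖((w.map re).map ofReal + I • (w.map im).map ofReal).det‖ :=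
        hpos.posSemidef.map_ofReal.norm_det_le_norm_det_add_I_smul hX
    _ = ‖w.det‖ := by rw [← hw]

theorem statement4 {r : ℕ} (hr : 1 ≤ r) (w : Matrix (Fin r) (Fin r) ℂ)
    (hsymm : w.IsSymm) (hpos : (w.map Complex.im).PosDef) :
    (w.map Complex.im).det ≤ ‖w.det‖ :=
  statement4_general w hsymm hpos
end

section
/- Let y be a real symmetric positive definite n×n matrix with eigenvalues λ_1 ≤ λ_2 ≤ … ≤ λ_n, and let Q be an n×r integer matrix of rank r, where 1 ≤ r ≤ n. Then det(Qᵀ y Q) ≥ λ_1 λ_2 ⋯ λ_r. -/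
/-!
Diagonalise `y = U D Uᵀ` with `U` orthogonal and put `B = Uᵀ Q`. By the Cauchy–Binet formula,
`det (Qᵀ y Q) = ∑_S (∏_{i ∈ S} μ_i) det (B_S)²` and `det (Qᵀ Q) = ∑_S det (B_S)²`, where `S` runs
over the `r`-element sets of rows and `μ` are the eigenvalues of `y`. Every product
`∏_{i ∈ S} μ_i` is at least `λ_1 ⋯ λ_r`, so `det (Qᵀ y Q) ≥ λ_1 ⋯ λ_r · det (Qᵀ Q)`. Finally
`det (Qᵀ Q)` is an integer, nonnegative as a sum of squares and nonzero since `Q` has rank `r`,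
hence at least `1`.
-/

open Matrix
open Finset Equiv

theorem Fin.val_le_val_of_strictMono {r n : ℕ} {f : Fin r → Fin n} (hf : StrictMono f)
    (i : Fin r) : (i : ℕ) ≤ f i := by
  obtain ⟨i, hi⟩ := i
  induction i with
  | zero => exact Nat.zero_le _
  | succ k ih => exact Nat.lt_of_le_of_lt (ih (by omega)) (hf (Fin.mk_lt_mk.2 k.lt_succ_self))

theorem Tuple.strictMono_comp_sort_of_injective {r : ℕ} {α : Type*} [LinearOrder α]
    {p : Fin r → α} (hp : Function.Injective p) : StrictMono (p ∘ Tuple.sort p) :=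
  (Tuple.monotone_sort p).strictMono_of_injective (hp.comp (Tuple.sort p).injective)

theorem Monotone.prod_castLE_le_prod_of_injective {R : Type*} [CommSemiring R] [PartialOrder R]
    [IsOrderedRing R] {n r : ℕ} {lam : Fin n → R} (hmono : Monotone lam) (hrn : r ≤ n)
    (hnonneg : ∀ k, 0 ≤ lam k) {q : Fin r → Fin n} (hq : Function.Injective q) :
    ∏ j, lam (Fin.castLE hrn j) ≤ ∏ i, lam (q i) :=
  calc ∏ j, lam (Fin.castLE hrn j)
      ≤ ∏ j, lam ((q ∘ Tuple.sort q) j) :=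
        prod_le_prod (fun _ _ => hnonneg _) fun j _ => hmono <| Fin.le_def.mpr <|
          Fin.val_le_val_of_strictMono (Tuple.strictMono_comp_sort_of_injective hq) j
    _ = ∏ i, lam (q i) := Equiv.prod_comp (Tuple.sort q) fun i => lam (q i)

theorem Finset.sum_injective_eq_sum_strictMono_sum_perm {r : ℕ} {α β : Type*} [Fintype α]
    [LinearOrder α] [AddCommMonoid β] (f : (Fin r → α) → β) :
    ∑ p with Function.Injective p, f p =
      ∑ g with StrictMono g, ∑ τ : Perm (Fin r), f (g ∘ τ) := by
  rw [Finset.sum_sigma']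
  refine (Finset.sum_bij (fun x _ => x.1 ∘ x.2) ?_ ?_ ?_ fun _ _ => rfl).symm
  · rintro ⟨g, τ⟩ hg
    simp only [mem_sigma, mem_filter, mem_univ, true_and, and_true] at hg
    simpa using hg.injective.comp τ.injective
  · rintro ⟨g₁, τ₁⟩ h₁ ⟨g₂, τ₂⟩ h₂ (heq : g₁ ∘ τ₁ = g₂ ∘ τ₂)
    simp only [mem_sigma, mem_filter, mem_univ, true_and, and_true] at h₁ h₂
    have hg : g₁ = g₂ := by
      have := Tuple.unique_monotone (f := g₁ ∘ τ₁) (σ := τ₁⁻¹) (τ := τ₂⁻¹)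
        (by simpa [Function.comp_assoc] using h₁.monotone)
        (by rw [heq]; simpa [Function.comp_assoc] using h₂.monotone)
      calc g₁ = (g₁ ∘ τ₁) ∘ ⇑τ₁⁻¹ := by ext; simp
        _ = (g₂ ∘ τ₂) ∘ ⇑τ₂⁻¹ := by rw [this, heq]
        _ = g₂ := by ext; simp
    subst hg
    rw [Equiv.ext fun i => h₁.injective (congrFun heq i)]
  · intro p hp
    simp only [mem_filter, mem_univ, true_and] at hp
    refine ⟨⟨p ∘ Tuple.sort p, (Tuple.sort p)⁻¹⟩, ?_, ?_⟩
    · simpa using Tuple.strictMono_comp_sort_of_injective hp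
    · ext i; simp

namespace Matrix

variable {R : Type*} [CommRing R] {ι : Type*} [Fintype ι]

theorem det_mul_eq_sum_prod_mul_det_submatrix {m : Type*} [Fintype m] [DecidableEq m]
    (M : Matrix m ι R) (N : Matrix ι m R) :
    det (M * N) = ∑ p : m → ι, (∏ i, N (p i) i) * det (M.submatrix id p) := by
  classical
  calc det (M * N)
      = ∑ σ : Perm m, ∑ p : m → ι, (Perm.sign σ : R) * ∏ i, M (σ i) (p i) * N (p i) i := by
        simp only [det_apply', mul_apply, prod_univ_sum, mul_sum, Fintype.piFinset_univ]
    _ = ∑ p : m → ι, ∑ σ : Perm m, (Perm.sign σ : R) * ∏ i, M (σ i) (p i) * N (p i) i :=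
        sum_comm
    _ = ∑ p : m → ι, (∏ i, N (p i) i) * det (M.submatrix id p) := by
        refine sum_congr rfl fun p _ => ?_
        simp only [det_apply', mul_sum, prod_mul_distrib, submatrix_apply, id]
        refine sum_congr rfl fun σ _ => ?_
        ring

theorem det_mul_eq_sum_det_submatrix_mul_det_submatrix {r : ℕ} [LinearOrder ι]
    (M : Matrix (Fin r) ι R) (N : Matrix ι (Fin r) R) :
    det (M * N) = ∑ g with StrictMono g, det (M.submatrix id g) * det (N.submatrix g id) := by
  rw [det_mul_eq_sum_prod_mul_det_submatrix, ← sum_filter_of_ne (p := Function.Injective),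
    sum_injective_eq_sum_strictMono_sum_perm]
  · refine sum_congr rfl fun g _ => ?_
    have hperm (τ : Perm (Fin r)) : M.submatrix id (g ∘ τ) = (M.submatrix id g).submatrix id τ :=
      rfl
    simp only [hperm, det_permute', det_apply' (N.submatrix g id), mul_sum]
    refine sum_congr rfl fun τ _ => ?_
    simp only [submatrix_apply, id, Function.comp_apply]
    ring
  · intro p _ hp
    by_contra hinj
    obtain ⟨i, j, hij, hne⟩ := Function.not_injective_iff.mp hinj
    exact hp (by rw [det_zero_of_column_eq hne fun k => by simp [hij], mul_zero])

theorem det_transpose_mul_diagonal_mul {r : ℕ} [LinearOrder ι] [DecidableEq ι]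
    (A : Matrix ι (Fin r) R) (d : ι → R) :
    det (Aᵀ * diagonal d * A) =
      ∑ g with StrictMono g, (∏ i, d (g i)) * det (A.submatrix g id) ^ 2 := by
  rw [det_mul_eq_sum_det_submatrix_mul_det_submatrix]
  refine sum_congr rfl fun g _ => ?_
  have hsub : (Aᵀ * diagonal d).submatrix id g = (A.submatrix g id)ᵀ * diagonal (d ∘ g) := by
    ext i j; simp [mul_diagonal]
  rw [hsub, det_mul, det_transpose, det_diagonal]
  simp only [Function.comp_apply]
  ring

theorem det_transpose_mul_self_eq_sum_sq {r : ℕ} [LinearOrder ι] (A : Matrix ι (Fin r) R) :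
    det (Aᵀ * A) = ∑ g with StrictMono g, det (A.submatrix g id) ^ 2 := by
  classical
  simpa using det_transpose_mul_diagonal_mul A 1

theorem mul_det_transpose_mul_self_le_det_transpose_mul_diagonal_mul {R : Type*} [CommRing R]
    [LinearOrder R] [IsStrictOrderedRing R] {r : ℕ} [LinearOrder ι] [DecidableEq ι]
    (A : Matrix ι (Fin r) R) {d : ι → R} {c : R}
    (hc : ∀ g : Fin r → ι, StrictMono g → c ≤ ∏ i, d (g i)) :
    c * det (Aᵀ * A) ≤ det (Aᵀ * diagonal d * A) := by
  rw [det_transpose_mul_self_eq_sum_sq, det_transpose_mul_diagonal_mul, mul_sum]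
  refine sum_le_sum fun g hg => mul_le_mul_of_nonneg_right (hc g ?_) (sq_nonneg _)
  simpa using hg

theorem IsHermitian.mul_det_transpose_mul_self_le {r : ℕ} [LinearOrder ι] [DecidableEq ι]
    {y : Matrix ι ι ℝ} (hy : y.IsHermitian) (X : Matrix ι (Fin r) ℝ) {c : ℝ}
    (hc : ∀ g : Fin r → ι, StrictMono g → c ≤ ∏ i, hy.eigenvalues (g i)) :
    c * det (Xᵀ * X) ≤ det (Xᵀ * y * X) := by
  set U : Matrix ι ι ℝ := (hy.eigenvectorUnitary : Matrix ι ι ℝ)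
  have hstar : star U = Uᵀ := conjTranspose_eq_transpose_of_trivial U
  have hspec : y = U * diagonal hy.eigenvalues * Uᵀ := by
    have := hy.spectral_theorem
    simp only [Unitary.conjStarAlgAut_apply, RCLike.ofReal_real_eq_id, Function.id_comp] at this
    rwa [← hstar]
  have hUUt : U * Uᵀ = 1 := by
    rw [← hstar]
    exact Unitary.mul_star_self_of_mem hy.eigenvectorUnitary.2
  have hgram : Xᵀ * X = (Uᵀ * X)ᵀ * (Uᵀ * X) := by
    rw [transpose_mul, transpose_transpose, Matrix.mul_assoc, ← Matrix.mul_assoc U, hUUt,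
      Matrix.one_mul]
  -- `y` occurs inside `hy.eigenvalues`, so only the visible occurrence may be rewritten.
  have hweighted : Xᵀ * y * X = (Uᵀ * X)ᵀ * diagonal hy.eigenvalues * (Uᵀ * X) := by
    conv_lhs => rw [hspec]
    simp only [transpose_mul, transpose_transpose, Matrix.mul_assoc]
  rw [hgram, hweighted]
  exact mul_det_transpose_mul_self_le_det_transpose_mul_diagonal_mul _ hc

theorem det_ne_zero_of_rank_eq_card {K m : Type*} [Field K] [Fintype m] [DecidableEq m]
    (A : Matrix m m K) (h : A.rank = Fintype.card m) : A.det ≠ 0 := by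
  have hrange : LinearMap.range A.mulVecLin = ⊤ :=
    Submodule.eq_top_of_finrank_eq (by rw [← rank, h, Module.finrank_fintype_fun_eq_card])
  exact (isUnit_iff_isUnit_det A).mp
    (mulVec_surjective_iff_isUnit.mp (LinearMap.range_eq_top.mp hrange)) |>.ne_zero

theorem cast_det_transpose_mul_self {m : Type*} [Fintype m] [DecidableEq m]
    (Q : Matrix ι m ℤ) :
    ((Qᵀ * Q).det : R) = ((Q.map (Int.cast : ℤ → R))ᵀ * Q.map (Int.cast : ℤ → R)).det := by
  rw [Int.cast_det]
  congr 1
  ext i j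
  simp [mul_apply]

theorem one_le_det_transpose_mul_self {r : ℕ} [LinearOrder ι] (Q : Matrix ι (Fin r) ℤ)
    (hQ : (Q.map (Int.cast : ℤ → ℚ)).rank = r) : 1 ≤ (Qᵀ * Q).det := by
  have hnonneg : 0 ≤ (Qᵀ * Q).det := by
    rw [det_transpose_mul_self_eq_sum_sq]
    exact sum_nonneg fun g _ => sq_nonneg _
  have hne : (Qᵀ * Q).det ≠ 0 := by
    have hrank : ((Q.map (Int.cast : ℤ → ℚ))ᵀ * Q.map (Int.cast : ℤ → ℚ)).rank =
        Fintype.card (Fin r) := by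
      rw [rank_transpose_mul_self, hQ, Fintype.card_fin]
    exact_mod_cast (cast_det_transpose_mul_self (R := ℚ) Q).trans_ne
      (det_ne_zero_of_rank_eq_card _ hrank)
  omega

end Matrix

noncomputable section

theorem statement5_general {n r : ℕ} (hrn : r ≤ n)
    (y : Matrix (Fin n) (Fin n) ℝ) (hy : y.PosDef)
    (lam : Fin n → ℝ) (hmono : Monotone lam)
    (hlam : ∃ σ : Equiv.Perm (Fin n), lam = hy.1.eigenvalues ∘ σ)
    (Q : Matrix (Fin n) (Fin r) ℤ)
    (hQ : (Q.map (Int.cast : ℤ → ℚ)).rank = r) :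
    ∏ j : Fin r, lam (Fin.castLE hrn j) ≤
      ((Q.map (Int.cast : ℤ → ℝ))ᵀ * y * Q.map (Int.cast : ℤ → ℝ)).det := by
  obtain ⟨σ, rfl⟩ := hlam
  have hnonneg (k : Fin n) : 0 ≤ (hy.1.eigenvalues ∘ σ) k := (hy.eigenvalues_pos _).le
  have hprod (g : Fin r → Fin n) (hg : StrictMono g) :
      ∏ j, (hy.1.eigenvalues ∘ σ) (Fin.castLE hrn j) ≤ ∏ i, hy.1.eigenvalues (g i) := by
    simpa using hmono.prod_castLE_le_prod_of_injective hrn hnonneg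
      (σ.symm.injective.comp hg.injective)
  have hgram : (1 : ℝ) ≤ ((Q.map (Int.cast : ℤ → ℝ))ᵀ * Q.map (Int.cast : ℤ → ℝ)).det := by
    rw [← cast_det_transpose_mul_self]
    exact_mod_cast one_le_det_transpose_mul_self Q hQ
  calc ∏ j, (hy.1.eigenvalues ∘ σ) (Fin.castLE hrn j)
      ≤ (∏ j, (hy.1.eigenvalues ∘ σ) (Fin.castLE hrn j)) *
          ((Q.map (Int.cast : ℤ → ℝ))ᵀ * Q.map (Int.cast : ℤ → ℝ)).det :=
        le_mul_of_one_le_right (prod_nonneg fun j _ => hnonneg _) hgram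
    _ ≤ _ := hy.1.mul_det_transpose_mul_self_le _ hprod

theorem statement5 {n r : ℕ} (hr1 : 1 ≤ r) (hrn : r ≤ n)
    (y : Matrix (Fin n) (Fin n) ℝ) (hy : y.PosDef)
    (lam : Fin n → ℝ) (hmono : Monotone lam)
    (hlam : ∃ σ : Equiv.Perm (Fin n), lam = hy.1.eigenvalues ∘ σ)
    (Q : Matrix (Fin n) (Fin r) ℤ)
    (hQ : (Q.map (Int.cast : ℤ → ℚ)).rank = r) :
    ∏ j : Fin r, lam (Fin.castLE hrn j) ≤
      ((Q.map (Int.cast : ℤ → ℝ))ᵀ * y * Q.map (Int.cast : ℤ → ℝ)).det :=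
  statement5_general hrn y hy lam hmono hlam Q hQ

end
end

section
/- For every n ≥ 1 and every z ∈ ℍ_n, the family (exp(π i · aᵀ z a))_{a ∈ ℤⁿ}, indexed by integer column vectors a of length n, is absolutely summable. -/
open Matrix

noncomputable section

/-! Since `|exp(π i aᵀ z a)| = exp(-π aᵀ (Im z) a)` and, by compactness of the unit sphere,
a positive definite form satisfies `aᵀ (Im z) a ≥ c ∑ aᵢ²` for some `c > 0`, the family is
dominated by the Gaussian `∏ᵢ exp(-π c aᵢ²)`, a product of summable one-variable theta series. -/

lemma summable_prod_apply_of_nonneg {α : Type*} {f : α → ℝ} (hf : Summable f) (hf₀ : 0 ≤ f) :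
    ∀ n : ℕ, Summable fun a : Fin n → α => ∏ i, f (a i)
  | 0 => .of_finite
  | n + 1 => by
    have hprod := hf.mul_of_nonneg (summable_prod_apply_of_nonneg hf hf₀ n) hf₀
      fun _ => Finset.prod_nonneg fun i _ => hf₀ _
    refine (hprod.comp_injective (Fin.consEquiv _).symm.injective).congr fun a => ?_
    simp [Fin.prod_univ_succ, Fin.tail]

lemma summable_exp_neg_pi_mul_int_sq {t : ℝ} (ht : 0 < t) :
    Summable fun m : ℤ => Real.exp (-Real.pi * (t * m ^ 2)) := by
  simpa using summable_pow_mul_jacobiTheta₂_term_bound 0 ht 0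

lemma exists_pos_mul_norm_sq_le {E : Type*} [NormedAddCommGroup E] [NormedSpace ℝ E]
    [FiniteDimensional ℝ E] {f : E → ℝ} (hf : Continuous f)
    (hf_smul : ∀ (t : ℝ) x, f (t • x) = t ^ 2 * f x) (hf_pos : ∀ x ≠ 0, 0 < f x) :
    ∃ c > 0, ∀ x, c * ‖x‖ ^ 2 ≤ f x := by
  have hf_zero : f 0 = 0 := by simpa using hf_smul 0 0
  rcases (Metric.sphere (0 : E) 1).eq_empty_or_nonempty with hS | hS
  · refine ⟨1, one_pos, fun x => ?_⟩
    obtain rfl : x = 0 := by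
      by_contra hx
      have : ‖x‖⁻¹ • x ∈ Metric.sphere (0 : E) 1 := by
        simp [norm_smul, norm_ne_zero_iff.mpr hx]
      simp [hS] at this
    simp [hf_zero]
  obtain ⟨x₀, hx₀, hmin⟩ := (isCompact_sphere (0 : E) 1).exists_isMinOn hS hf.continuousOn
  refine ⟨f x₀, hf_pos x₀ (ne_zero_of_mem_unit_sphere ⟨x₀, hx₀⟩), fun x => ?_⟩
  rcases eq_or_ne x 0 with rfl | hx
  · simp [hf_zero]
  have hx' : ‖x‖ ≠ 0 := norm_ne_zero_iff.mpr hx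
  have hle : f x₀ ≤ f (‖x‖⁻¹ • x) := hmin (by simp [norm_smul, hx'])
  calc f x₀ * ‖x‖ ^ 2 ≤ f (‖x‖⁻¹ • x) * ‖x‖ ^ 2 := by gcongr
    _ = f x := by rw [hf_smul]; field_simp

lemma Matrix.PosDef.exists_pos_mul_sum_sq_le {ι : Type*} [Fintype ι] {M : Matrix ι ι ℝ}
    (hM : M.PosDef) : ∃ c > 0, ∀ x : ι → ℝ, c * ∑ i, x i ^ 2 ≤ x ⬝ᵥ M *ᵥ x := by
  obtain ⟨c, hc, hle⟩ := exists_pos_mul_norm_sq_le (E := EuclideanSpace ℝ ι)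
    (f := fun x => x.ofLp ⬝ᵥ M *ᵥ x.ofLp) (by fun_prop)
    (fun t x => by simp [mulVec_smul, pow_two, mul_assoc])
    (fun x hx => hM.dotProduct_mulVec_pos (by simpa using hx))
  refine ⟨c, hc, fun x => ?_⟩
  simpa [EuclideanSpace.norm_sq_eq] using hle (WithLp.toLp 2 x)

lemma im_sum_sum_ofReal_mul_mul_ofReal {ι : Type*} [Fintype ι] (z : Matrix ι ι ℂ) (x : ι → ℝ) :
    (∑ i, ∑ j, (x i : ℂ) * z i j * x j).im = x ⬝ᵥ z.map Complex.im *ᵥ x := by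
  simp [dotProduct, mulVec, Finset.mul_sum, Complex.im_sum, mul_assoc]

theorem statement10_general {n : ℕ} (z : Matrix (Fin n) (Fin n) ℂ)
    (hz : z ∈ SiegelUpper n) :
    Summable fun a : Fin n → ℤ =>
      ‖Complex.exp ((Real.pi : ℂ) * Complex.I *
        ∑ i, ∑ j, (a i : ℂ) * z i j * (a j : ℂ))‖ := by
  obtain ⟨c, hc, hc_le⟩ := hz.2.exists_pos_mul_sum_sq_le
  have hgauss := summable_prod_apply_of_nonneg (summable_exp_neg_pi_mul_int_sq hc)
    (fun _ => (Real.exp_pos _).le) n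
  refine hgauss.of_nonneg_of_le (fun _ => norm_nonneg _) fun a => ?_
  have him := im_sum_sum_ofReal_mul_mul_ofReal z fun i => (a i : ℝ)
  push_cast at him
  rw [Complex.norm_exp, ← Real.exp_sum, Real.exp_le_exp, mul_assoc, Complex.re_ofReal_mul,
    Complex.I_mul_re, him, ← Finset.mul_sum, ← Finset.mul_sum]
  linarith [mul_le_mul_of_nonneg_left (hc_le fun i => (a i : ℝ)) Real.pi_pos.le]

theorem statement10 {n : ℕ} (hn : 1 ≤ n) (z : Matrix (Fin n) (Fin n) ℂ)
    (hz : z ∈ SiegelUpper n) :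
    Summable fun a : Fin n → ℤ =>
      ‖Complex.exp ((Real.pi : ℂ) * Complex.I *
        ∑ i, ∑ j, (a i : ℂ) * z i j * (a j : ℂ))‖ :=
  statement10_general z hz
end
end

section
/- Let p be a prime and let d be an invertible n×n matrix over ℚ_p. Then there exists an n×n matrix u with entries in ℤ_p, invertible over ℤ_p, such that the product u·d (computed over ℚ_p) is upper triangular and its (i,i)-entry equals p^{a_i} for some integer a_i, for each 1 ≤ i ≤ n. -/
/-!
Induction on `n`. Pick an entry of maximal norm in the first column of `d`; after dividing by
it every other entry of that column lies in `ℤ_[p]`, so an elementary matrix over `ℤ_[p]` followed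
by a swap clears the column except for its top entry, which a unit of `ℤ_[p]` turns into a power
of `p`.
The lower right block of the result is again invertible, and `diag(1, u')`, with `u'` given by the
induction hypothesis for that block, completes the triangularization.
-/

open Matrix

theorem Padic.exists_isUnit_mul_eq_zpow {p : ℕ} [Fact p.Prime] {x : ℚ_[p]} (hx : x ≠ 0) :
    ∃ ε : ℤ_[p], IsUnit ε ∧ ∃ a : ℤ, ε * x = (p : ℚ_[p]) ^ a := by
  have hp : (p : ℝ) ≠ 0 := by exact_mod_cast (Fact.out : p.Prime).ne_zero
  have hε : ‖(p : ℚ_[p]) ^ x.valuation * x⁻¹‖ = 1 := by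
    rw [norm_mul, Padic.norm_p_zpow, norm_inv, Padic.norm_eq_zpow_neg_valuation hx,
      ← _root_.zpow_neg, ← zpow_add₀ hp, neg_neg, neg_add_cancel, zpow_zero]
  exact ⟨PadicInt.mkUnits hε, Units.isUnit _, x.valuation, inv_mul_cancel_right₀ hx _⟩

namespace Matrix

section Elementary

variable {R n : Type*} [CommRing R] [Fintype n] [DecidableEq n]

theorem det_one_updateCol (j : n) (w : n → R) : ((1 : Matrix n n R).updateCol j w).det = w j := by
  rw [← cramer_apply, cramer_one]
  rfl

theorem one_updateCol_mulVec_apply (j : n) (w c : n → R) (i : n) :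
    ((1 : Matrix n n R).updateCol j w *ᵥ c) i = w i * c j + if i = j then 0 else c i := by
  simp [mulVec, dotProduct, updateCol_apply, one_apply, ite_mul, Finset.sum_ite, Finset.filter_eq']

theorem isUnit_det_swap (i j : n) : IsUnit (swap R i j).det := by
  rw [swap, det_permutation]
  exact (Equiv.Perm.sign _).isUnit.map (Int.castRingHom R)

end Elementary

section BlockOne

variable {R : Type*} [CommRing R] {n : ℕ}

/-- The block diagonal matrix `diag(1, u)`. -/
def blockOne (u : Matrix (Fin n) (Fin n) R) : Matrix (Fin (n + 1)) (Fin (n + 1)) R :=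
  of (Fin.cons (Pi.single 0 1) fun i => Fin.cons 0 (u i))

@[simp]
theorem blockOne_zero_zero (u : Matrix (Fin n) (Fin n) R) : blockOne u 0 0 = 1 := by
  simp [blockOne]

@[simp]
theorem blockOne_zero_succ (u : Matrix (Fin n) (Fin n) R) (j : Fin n) :
    blockOne u 0 j.succ = 0 := by
  simp [blockOne, Fin.succ_ne_zero]

@[simp]
theorem blockOne_succ_zero (u : Matrix (Fin n) (Fin n) R) (i : Fin n) :
    blockOne u i.succ 0 = 0 := by
  simp [blockOne]

@[simp]
theorem blockOne_succ_succ (u : Matrix (Fin n) (Fin n) R) (i j : Fin n) :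
    blockOne u i.succ j.succ = u i j := by
  simp [blockOne]

@[simp]
theorem blockOne_submatrix_succ_succ (u : Matrix (Fin n) (Fin n) R) :
    (blockOne u).submatrix Fin.succ Fin.succ = u := by
  ext i j
  simp

theorem map_blockOne {S : Type*} [CommRing S] (f : R →+* S) (u : Matrix (Fin n) (Fin n) R) :
    (blockOne u).map f = blockOne (u.map f) := by
  ext i j
  cases i using Fin.cases <;> cases j using Fin.cases <;> simp

theorem det_eq_mul_det_submatrix_succ {M : Matrix (Fin (n + 1)) (Fin (n + 1)) R}
    (hM : ∀ i : Fin n, M i.succ 0 = 0) : M.det = M 0 0 * (M.submatrix Fin.succ Fin.succ).det := by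
  simp [det_succ_column_zero M, Fin.sum_univ_succ, hM]

theorem det_blockOne (u : Matrix (Fin n) (Fin n) R) : (blockOne u).det = u.det := by
  rw [det_eq_mul_det_submatrix_succ (blockOne_succ_zero u), blockOne_zero_zero, one_mul,
    blockOne_submatrix_succ_succ]

theorem blockOne_mul_apply_zero (u : Matrix (Fin n) (Fin n) R)
    (M : Matrix (Fin (n + 1)) (Fin (n + 1)) R) (j : Fin (n + 1)) :
    (blockOne u * M) 0 j = M 0 j := by
  simp [mul_apply, Fin.sum_univ_succ]

theorem blockOne_mul_apply_succ (u : Matrix (Fin n) (Fin n) R)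
    (M : Matrix (Fin (n + 1)) (Fin (n + 1)) R) (i : Fin n) (j : Fin (n + 1)) :
    (blockOne u * M) i.succ j = ∑ k, u i k * M k.succ j := by
  simp [mul_apply, Fin.sum_univ_succ]

theorem blockOne_mul_submatrix_succ_succ (u : Matrix (Fin n) (Fin n) R)
    (M : Matrix (Fin (n + 1)) (Fin (n + 1)) R) :
    (blockOne u * M).submatrix Fin.succ Fin.succ = u * M.submatrix Fin.succ Fin.succ := by
  ext i j
  simp [mul_apply, Fin.sum_univ_succ]

theorem blockTriangular_of_submatrix_succ {M : Matrix (Fin (n + 1)) (Fin (n + 1)) R}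
    (hM : ∀ i : Fin n, M i.succ 0 = 0) (h : (M.submatrix Fin.succ Fin.succ).BlockTriangular id) :
    M.BlockTriangular id := by
  intro i j hji
  cases i using Fin.cases with
  | zero => exact absurd hji (Fin.not_lt_zero j)
  | succ i =>
    cases j using Fin.cases with
    | zero => exact hM i
    | succ j => exact h (Fin.succ_lt_succ_iff.1 hji)

theorem BlockTriangular.blockOne_mul {u : Matrix (Fin n) (Fin n) R}
    {M : Matrix (Fin (n + 1)) (Fin (n + 1)) R} (hM : ∀ i : Fin n, M i.succ 0 = 0)
    (h : (u * M.submatrix Fin.succ Fin.succ).BlockTriangular id) :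
    (blockOne u * M).BlockTriangular id :=
  blockTriangular_of_submatrix_succ (fun i => by simp [blockOne_mul_apply_succ, hM])
    (by rwa [blockOne_mul_submatrix_succ_succ])

end BlockOne

end Matrix

namespace PadicInt

variable {p : ℕ} [Fact p.Prime] {n : Type*} [Fintype n] [DecidableEq n]

theorem exists_isUnit_det_mulVec_eq_single_of_norm_le {c : n → ℚ_[p]} {j : n}
    (hj : ∀ i, ‖c i‖ ≤ ‖c j‖) (hcj : c j ≠ 0) :
    ∃ u : Matrix n n ℤ_[p], IsUnit u.det ∧
      ∃ a : ℤ, u.map (algebraMap ℤ_[p] ℚ_[p]) *ᵥ c = Pi.single j ((p : ℚ_[p]) ^ a) := by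
  obtain ⟨ε, hε, a, hεa⟩ := Padic.exists_isUnit_mul_eq_zpow hcj
  let q (i : n) : ℤ_[p] := ⟨-(c i / c j), by
    simpa only [norm_neg, norm_div] using div_le_one_of_le₀ (hj i) (norm_nonneg _)⟩
  refine ⟨(1 : Matrix n n ℤ_[p]).updateCol j (Function.update q j ε), ?_, a, ?_⟩
  · rwa [det_one_updateCol, Function.update_self]
  ext i
  rw [map_updateCol, Matrix.map_one _ (map_zero _) (map_one _), one_updateCol_mulVec_apply]
  obtain rfl | hij := eq_or_ne i j
  · simpa using hεa
  · simp only [Function.comp_apply, Function.update_of_ne hij, if_neg hij,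
      Pi.single_eq_of_ne hij]
    show -(c i / c j) * c j + c i = 0
    rw [neg_mul, div_mul_cancel₀ _ hcj, neg_add_cancel]

theorem exists_isUnit_det_mulVec_eq_single {c : n → ℚ_[p]} (hc : c ≠ 0) (i₀ : n) :
    ∃ u : Matrix n n ℤ_[p], IsUnit u.det ∧
      ∃ a : ℤ, u.map (algebraMap ℤ_[p] ℚ_[p]) *ᵥ c = Pi.single i₀ ((p : ℚ_[p]) ^ a) := by
  have : Nonempty n := ⟨i₀⟩
  obtain ⟨j, hj⟩ := Finite.exists_max (fun i => ‖c i‖)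
  have hcj : c j ≠ 0 := fun h => hc <| funext fun i => by simpa [h] using hj i
  obtain ⟨u, hu, a, hua⟩ := exists_isUnit_det_mulVec_eq_single_of_norm_le hj hcj
  refine ⟨swap ℤ_[p] i₀ j * u, by rw [det_mul]; exact (isUnit_det_swap _ _).mul hu, a, ?_⟩
  rw [Matrix.map_mul, ← mulVec_mulVec, hua, map_swap, swap_mulVec, Pi.single_comp_equiv,
    Equiv.symm_swap, Equiv.swap_apply_right]

end PadicInt

theorem statement12 {p : ℕ} [Fact p.Prime] {n : ℕ}
    (d : Matrix (Fin n) (Fin n) ℚ_[p]) (hd : IsUnit d.det) :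
    ∃ u : Matrix (Fin n) (Fin n) ℤ_[p], IsUnit u.det ∧
      Matrix.BlockTriangular (u.map ((↑) : ℤ_[p] → ℚ_[p]) * d) id ∧
      ∀ i : Fin n, ∃ a : ℤ, (u.map ((↑) : ℤ_[p] → ℚ_[p]) * d) i i = (p : ℚ_[p]) ^ a := by
  -- `(↑)` unfolds to the ring hom `algebraMap ℤ_[p] ℚ_[p]`, the form `map_mul`/`map_det` need.
  change ∃ u : Matrix (Fin n) (Fin n) ℤ_[p], IsUnit u.det ∧
    BlockTriangular (u.map (algebraMap ℤ_[p] ℚ_[p]) * d) id ∧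
    ∀ i, ∃ a : ℤ, (u.map (algebraMap ℤ_[p] ℚ_[p]) * d) i i = (p : ℚ_[p]) ^ a
  induction n with
  | zero => exact ⟨1, by simp, fun i => i.elim0, fun i => i.elim0⟩
  | succ n ih =>
    have hcol : (fun i => d i 0) ≠ 0 := fun h =>
      hd.ne_zero (det_eq_zero_of_column_eq_zero 0 (congrFun h))
    obtain ⟨u₁, hu₁, a, hu₁d⟩ := PadicInt.exists_isUnit_det_mulVec_eq_single hcol 0
    set M := u₁.map (algebraMap ℤ_[p] ℚ_[p]) * d
    have hM : (fun i => M i 0) = Pi.single 0 ((p : ℚ_[p]) ^ a) := hu₁d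
    have hMsucc : ∀ i : Fin n, M i.succ 0 = 0 := fun i => by simpa using congrFun hM i.succ
    have hMdet : IsUnit M.det := by
      rw [det_mul, ← RingHom.mapMatrix_apply, ← RingHom.map_det]
      exact (hu₁.map _).mul hd
    rw [det_eq_mul_det_submatrix_succ hMsucc] at hMdet
    obtain ⟨u₂, hu₂, htri, hdiag⟩ := ih _ (isUnit_of_mul_isUnit_right hMdet)
    refine ⟨blockOne u₂ * u₁, by rw [det_mul, det_blockOne]; exact hu₂.mul hu₁, ?_, ?_⟩ <;>
      rw [Matrix.map_mul, map_blockOne, Matrix.mul_assoc]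
    · exact htri.blockOne_mul hMsucc
    · refine Fin.forall_fin_succ.2 ⟨⟨a, ?_⟩, fun i => ?_⟩
      · simpa [blockOne_mul_apply_zero] using congrFun hM 0
      · simpa [← blockOne_mul_submatrix_succ_succ] using hdiag i
end
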